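/- Let G be an n-vertex graph such that α₁(G) + τ(G) > n²/4 while every proper induced subgraph H of G satisfies α₁(H) + τ(H) ≤ |V(H)|²/4 (i.e., G is a minimal counterexample to the Erdős–Gallai–Tuza conjecture). Then for every nonempty proper subset S of V(G), the edge cut satisfies |[S, S̄]| > |S|(n − |S|)/2. -/

import Mathlib

open Finset

/-- `A` is a triangle-independent set of edges of `G`: it consists of edges of `G`
and contains at most one edge from each triangle of `G`. -/
def TriIndep {V : Type*} (G : SimpleGraph V) (A : Finset (Sym2 V)) : Prop :=
  (A : Set (Sym2 V)) ⊆ G.edgeSet ∧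
    ∀ x y z : V, G.Adj x y → G.Adj y z → G.Adj x z →
      ¬(s(x, y) ∈ A ∧ s(y, z) ∈ A)

/-- `α₁ G`: the maximum size of a triangle-independent set of edges of `G`. -/
noncomputable def alpha1 {V : Type*} [Fintype V] (G : SimpleGraph V) : ℕ :=
  sSup {k | ∃ A : Finset (Sym2 V), TriIndep G A ∧ A.card = k}

/-- `τ G`: the minimum size of a set of edges whose deletion makes `G` triangle-free. -/
noncomputable def tau {V : Type*} [Fintype V] (G : SimpleGraph V) : ℕ :=
  sInf {k | ∃ X : Finset (Sym2 V), (X : Set (Sym2 V)) ⊆ G.edgeSet ∧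
    (G.deleteEdges (X : Set (Sym2 V))).CliqueFree 3 ∧ X.card = k}

/-- `τ_B G`: the minimum size of a set of edges whose deletion makes `G` bipartite. -/
noncomputable def tauB {V : Type*} [Fintype V] (G : SimpleGraph V) : ℕ :=
  sInf {k | ∃ X : Finset (Sym2 V), (X : Set (Sym2 V)) ⊆ G.edgeSet ∧
    (G.deleteEdges (X : Set (Sym2 V))).Colorable 2 ∧ X.card = k}

open scoped Classical in
/-- The edge cut `[S, S̄]`: the set of edges of `G` with one endpoint in `S`
and the other outside `S`. -/
noncomputable def edgeCut {V : Type*} [Fintype V] (G : SimpleGraph V) (S : Finset V) :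
    Finset (Sym2 V) :=
  G.edgeFinset.filter (fun e => ∃ x ∈ S, ∃ y ∉ S, e = s(x, y))

open scoped Classical in
/-- The number of edges of `G`. -/
noncomputable def edgeCount {V : Type*} [Fintype V] (G : SimpleGraph V) : ℕ :=
  G.edgeFinset.card

/-- The independence number of `G`. -/
noncomputable def indepNum {V : Type*} [Fintype V] (G : SimpleGraph V) : ℕ :=
  sSup {k | ∃ I : Finset V, (∀ x ∈ I, ∀ y ∈ I, ¬G.Adj x y) ∧ I.card = k}

/-- `K₄⁻`: the complete graph on 4 vertices with one edge deleted. -/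
def K4minus : SimpleGraph (Fin 4) := (SimpleGraph.completeGraph (Fin 4)).deleteEdges {s(0, 1)}

/-!
Fix a maximum triangle-independent set `A` and a vertex set `S`. Optimal triangle covers of
`G[S]` and `G[S̄]`, together with the cut edges outside `A`, cover every triangle of `G`: a
triangle meeting both sides has two cut edges, and these cannot both lie in `A`. The edges of
`A` inside `S` or inside `S̄` are triangle-independent in `G[S]` resp. `G[S̄]`, and the rest of
`A` lies in the cut. Adding up,
`α₁(G) + τ(G) ≤ (α₁ + τ)(G[S]) + (α₁ + τ)(G[S̄]) + |[S, S̄]|`,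
and minimality turns this into `n²/4 < |S|²/4 + (n - |S|)²/4 + |[S, S̄]|`.
-/

open SimpleGraph

lemma SimpleGraph.cliqueFree_three_deleteEdges_iff {V : Type*} {G : SimpleGraph V}
    {X : Set (Sym2 V)} :
    (G.deleteEdges X).CliqueFree 3 ↔ ∀ x y z, G.Adj x y → G.Adj y z → G.Adj x z →
      s(x, y) ∈ X ∨ s(y, z) ∈ X ∨ s(x, z) ∈ X := by
  classical
  constructor
  · intro h x y z hxy hyz hxz
    by_contra! hX
    refine h {x, y, z} (is3Clique_triple_iff.mpr ?_)
    simp only [deleteEdges_adj]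
    exact ⟨⟨hxy, hX.1⟩, ⟨hxz, hX.2.2⟩, ⟨hyz, hX.2.1⟩⟩
  · intro h t ht
    obtain ⟨x, y, z, hxy, hxz, hyz, -⟩ := is3Clique_iff.mp ht
    rw [deleteEdges_adj] at hxy hxz hyz
    rcases h x y z hxy.1 hyz.1 hxz.1 with h | h | h
    exacts [hxy.2 h, hyz.2 h, hxz.2 h]

section Extremal

variable {V : Type*} [Fintype V] (G : SimpleGraph V)

lemma bddAbove_triIndep_card :
    BddAbove {k | ∃ A : Finset (Sym2 V), TriIndep G A ∧ A.card = k} :=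
  ⟨Fintype.card (Sym2 V), by rintro k ⟨A, -, rfl⟩; exact A.card_le_univ⟩

lemma exists_triIndep_card_eq_alpha1 :
    ∃ A : Finset (Sym2 V), TriIndep G A ∧ A.card = alpha1 G :=
  show alpha1 G ∈ {k | ∃ A : Finset (Sym2 V), TriIndep G A ∧ A.card = k} from
    Nat.sSup_mem ⟨0, ∅, ⟨by simp, by simp⟩, rfl⟩ (bddAbove_triIndep_card G)

variable {G} in
lemma TriIndep.card_le_alpha1 {A : Finset (Sym2 V)} (hA : TriIndep G A) :
    A.card ≤ alpha1 G :=
  le_csSup (bddAbove_triIndep_card G) ⟨A, hA, rfl⟩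

lemma tau_le_card {X : Finset (Sym2 V)} (hXG : (X : Set (Sym2 V)) ⊆ G.edgeSet)
    (hX : (G.deleteEdges X).CliqueFree 3) : tau G ≤ X.card :=
  Nat.sInf_le ⟨X, hXG, hX, rfl⟩

lemma exists_card_eq_tau : ∃ X : Finset (Sym2 V), (X : Set (Sym2 V)) ⊆ G.edgeSet ∧
    (G.deleteEdges X).CliqueFree 3 ∧ X.card = tau G := by
  classical
  refine Nat.sInf_mem (s := {k | ∃ X : Finset (Sym2 V), (X : Set (Sym2 V)) ⊆ G.edgeSet ∧
    (G.deleteEdges X).CliqueFree 3 ∧ X.card = k}) ⟨_, G.edgeFinset, by simp, ?_, rfl⟩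
  rw [coe_edgeFinset, deleteEdges_edgeSet, sdiff_self]
  exact cliqueFree_bot le_add_self

end Extremal

lemma exists_card_eq_tau_induce {V : Type*} (G : SimpleGraph V) (T : Finset V) :
    ∃ X : Finset (Sym2 V), (X : Set (Sym2 V)) ⊆ G.edgeSet ∧ X.card = tau (G.induce (T : Set V)) ∧
      ∀ x ∈ T, ∀ y ∈ T, ∀ z ∈ T, G.Adj x y → G.Adj y z → G.Adj x z →
        s(x, y) ∈ X ∨ s(y, z) ∈ X ∨ s(x, z) ∈ X := by
  classical
  obtain ⟨Y, hYG, hY, hYcard⟩ := exists_card_eq_tau (G.induce (T : Set V))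
  have hinj : Function.Injective (Sym2.map (Subtype.val : ↥(T : Set V) → V)) :=
    Sym2.map.injective Subtype.val_injective
  refine ⟨Y.image (Sym2.map Subtype.val), ?_, by rw [card_image_of_injective _ hinj, hYcard], ?_⟩
  · rw [coe_image]
    rintro _ ⟨e, he, rfl⟩
    exact (Embedding.induce _).map_mem_edgeSet_iff.mpr (hYG he)
  · intro x hx y hy z hz hxy hyz hxz
    rcases cliqueFree_three_deleteEdges_iff.mp hY ⟨x, hx⟩ ⟨y, hy⟩ ⟨z, hz⟩ hxy hyz hxz
      with h | h | h
    exacts [.inl (mem_image_of_mem _ h), .inr (.inl (mem_image_of_mem _ h)),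
      .inr (.inr (mem_image_of_mem _ h))]

section EdgeCut

variable {V : Type*} [Fintype V] (G : SimpleGraph V)

lemma mem_edgeCut {S : Finset V} {x y : V} :
    s(x, y) ∈ edgeCut G S ↔ G.Adj x y ∧ ¬(x ∈ S ↔ y ∈ S) := by
  classical
  simp only [edgeCut, mem_filter, mem_edgeFinset, mem_edgeSet, Sym2.eq_iff]
  constructor
  · rintro ⟨hxy, a, ha, b, hb, (⟨rfl, rfl⟩ | ⟨rfl, rfl⟩)⟩ <;> tauto
  · rintro ⟨hxy, h⟩
    by_cases hx : x ∈ S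
    · exact ⟨hxy, x, hx, y, by tauto, by tauto⟩
    · exact ⟨hxy, y, by tauto, x, hx, by tauto⟩

lemma edgeCut_subset_edgeSet (S : Finset V) : (edgeCut G S : Set (Sym2 V)) ⊆ G.edgeSet := by
  intro e he
  induction e using Sym2.ind with
  | h x y => exact ((mem_edgeCut G).mp he).1

end EdgeCut

namespace TriIndep

variable {V : Type*} {G : SimpleGraph V} {A : Finset (Sym2 V)}

lemma not_two_mem (hA : TriIndep G A) {x y z : V} (hxy : G.Adj x y) (hyz : G.Adj y z)
    (hxz : G.Adj x z) :
    ¬(s(x, y) ∈ A ∧ s(y, z) ∈ A) ∧ ¬(s(x, y) ∈ A ∧ s(x, z) ∈ A) ∧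
      ¬(s(x, z) ∈ A ∧ s(y, z) ∈ A) := by
  refine ⟨hA.2 x y z hxy hyz hxz, ?_, ?_⟩
  · rw [Sym2.eq_swap]; exact hA.2 y x z hxy.symm hxz hyz
  · rw [Sym2.eq_swap (a := y)]; exact hA.2 x z y hxz hyz.symm hxy

lemma comap_induce (hA : TriIndep G A) (T : Set V) :
    TriIndep (G.induce T)
      (A.preimage (Sym2.map (Subtype.val : T → V))
        (Sym2.map.injective Subtype.val_injective).injOn) := by
  refine ⟨fun e he => ?_, fun x y z hxy hyz hxz h => hA.2 x y z hxy hyz hxz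
    (by simpa only [mem_preimage, Sym2.map_mk] using h)⟩
  exact (Embedding.induce T).map_mem_edgeSet_iff.mp (hA.1 (mem_preimage.mp he))

variable [DecidableEq V]

lemma card_inter_sym2_le_alpha1_induce (hA : TriIndep G A) (T : Finset V) :
    (A ∩ T.sym2).card ≤ alpha1 (G.induce (T : Set V)) := by
  classical
  refine le_trans ?_ (hA.comap_induce T).card_le_alpha1
  rw [card_preimage]
  refine card_le_card fun e he => ?_
  rw [mem_inter] at he
  refine mem_filter.mpr ⟨he.1, ?_⟩
  induction e using Sym2.ind with
  | h x y =>
    have hT := mem_sym2_iff.mp he.2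
    exact ⟨s(⟨x, hT x (Sym2.mem_mk_left x y)⟩, ⟨y, hT y (Sym2.mem_mk_right x y)⟩), rfl⟩

variable [Fintype V]

lemma card_le_alpha1_induce_add (hA : TriIndep G A) (S : Finset V) :
    A.card ≤ alpha1 (G.induce (S : Set V)) + alpha1 (G.induce ((Sᶜ : Finset V) : Set V)) +
      (edgeCut G S ∩ A).card := by
  have hsplit : A ⊆ A ∩ S.sym2 ∪ A ∩ Sᶜ.sym2 ∪ edgeCut G S ∩ A := by
    intro e he
    induction e using Sym2.ind with
    | h x y =>
      have hxy : G.Adj x y := hA.1 he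
      simp only [mem_union, mem_inter, mem_sym2_iff, Sym2.mem_iff, forall_eq_or_imp, forall_eq,
        mem_compl, mem_edgeCut]
      tauto
  calc A.card ≤ (A ∩ S.sym2 ∪ A ∩ Sᶜ.sym2 ∪ edgeCut G S ∩ A).card := card_le_card hsplit
    _ ≤ (A ∩ S.sym2).card + (A ∩ Sᶜ.sym2).card + (edgeCut G S ∩ A).card :=
      (card_union_le _ _).trans (by gcongr; exact card_union_le _ _)
    _ ≤ _ := by
      gcongr
      exacts [hA.card_inter_sym2_le_alpha1_induce S, hA.card_inter_sym2_le_alpha1_induce Sᶜ]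

lemma tau_le_tau_induce_add (hA : TriIndep G A) (S : Finset V) :
    tau G ≤ tau (G.induce (S : Set V)) + tau (G.induce ((Sᶜ : Finset V) : Set V)) +
      (edgeCut G S \ A).card := by
  obtain ⟨X₁, hX₁G, hX₁card, hX₁⟩ := exists_card_eq_tau_induce G S
  obtain ⟨X₂, hX₂G, hX₂card, hX₂⟩ := exists_card_eq_tau_induce G Sᶜ
  set X := X₁ ∪ X₂ ∪ edgeCut G S \ A
  have hXG : (X : Set (Sym2 V)) ⊆ G.edgeSet := by
    simp only [X, coe_union, coe_sdiff, Set.union_subset_iff]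
    exact ⟨⟨hX₁G, hX₂G⟩, Set.sdiff_subset.trans (edgeCut_subset_edgeSet G S)⟩
  have hX : (G.deleteEdges X).CliqueFree 3 := by
    refine cliqueFree_three_deleteEdges_iff.mpr fun x y z hxy hyz hxz => ?_
    by_contra! hX
    have hsame : ∀ {u v}, G.Adj u v → s(u, v) ∉ X → (u ∈ S ↔ v ∈ S) ∨ s(u, v) ∈ A := by
      intro u v huv h
      refine or_iff_not_imp_right.mpr fun hnA => ?_
      by_contra hcut
      exact h (mem_union_right _ (mem_sdiff.mpr ⟨(mem_edgeCut G).mpr ⟨huv, hcut⟩, hnA⟩))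
    have hA₂ := hA.not_two_mem hxy hyz hxz
    have e₁ := hsame hxy hX.1
    have e₂ := hsame hyz hX.2.1
    have e₃ := hsame hxz hX.2.2
    -- every cut edge of the triangle lies in `A`, and at most one of its edges does
    have hmono : (x ∈ S ∧ y ∈ S ∧ z ∈ S) ∨ (x ∉ S ∧ y ∉ S ∧ z ∉ S) := by
      clear * - e₁ e₂ e₃ hA₂
      grind
    have hX₁X : X₁ ⊆ X := subset_union_left.trans subset_union_left
    have hX₂X : X₂ ⊆ X := subset_union_right.trans subset_union_left
    rcases hmono with ⟨hx, hy, hz⟩ | ⟨hx, hy, hz⟩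
    · rcases hX₁ x hx y hy z hz hxy hyz hxz with h | h | h
      exacts [hX.1 (hX₁X h), hX.2.1 (hX₁X h), hX.2.2 (hX₁X h)]
    · rcases hX₂ x (mem_compl.mpr hx) y (mem_compl.mpr hy) z (mem_compl.mpr hz) hxy hyz hxz
        with h | h | h
      exacts [hX.1 (hX₂X h), hX.2.1 (hX₂X h), hX.2.2 (hX₂X h)]
  calc tau G ≤ X.card := tau_le_card G hXG hX
    _ ≤ X₁.card + X₂.card + (edgeCut G S \ A).card :=
      (card_union_le _ _).trans (by gcongr; exact card_union_le _ _)
    _ = _ := by rw [hX₁card, hX₂card]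

end TriIndep

lemma alpha1_add_tau_le_induce_add {V : Type*} [Fintype V] [DecidableEq V]
    (G : SimpleGraph V) (S : Finset V) :
    alpha1 G + tau G ≤ (alpha1 (G.induce (S : Set V)) + tau (G.induce (S : Set V))) +
      (alpha1 (G.induce ((Sᶜ : Finset V) : Set V)) + tau (G.induce ((Sᶜ : Finset V) : Set V))) +
      (edgeCut G S).card := by
  obtain ⟨A, hA, hAcard⟩ := exists_triIndep_card_eq_alpha1 G
  have hα := hA.card_le_alpha1_induce_add S
  have hτ := hA.tau_le_tau_induce_add S
  have hcut := card_sdiff_add_card_inter (edgeCut G S) A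
  omega

/-- If `G` is a minimal counterexample to the Erdős–Gallai–Tuza conjecture
(`α₁(G) + τ(G) > n²/4` but every proper induced subgraph satisfies the conjecture),
then every nonempty proper vertex subset `S` satisfies `|[S, S̄]| > |S|(n − |S|)/2`. -/
theorem stmt1 {V : Type*} [Fintype V] (G : SimpleGraph V) (n : ℕ)
    (hn : Fintype.card V = n)
    (hctx : (alpha1 G + tau G : ℝ) > n ^ 2 / 4)
    (hmin : ∀ S : Finset V, S ≠ Finset.univ →
      (alpha1 (G.induce (S : Set V)) + tau (G.induce (S : Set V)) : ℝ) ≤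
        (S.card : ℝ) ^ 2 / 4)
    (S : Finset V) (hS : S.Nonempty) (hSu : S ≠ Finset.univ) :
    ((edgeCut G S).card : ℝ) > S.card * (n - S.card) / 2 := by
  classical
  have hsplit : (alpha1 G + tau G : ℝ) ≤
      (alpha1 (G.induce (S : Set V)) + tau (G.induce (S : Set V)) : ℝ) +
      (alpha1 (G.induce ((Sᶜ : Finset V) : Set V)) + tau (G.induce ((Sᶜ : Finset V) : Set V))) +
      (edgeCut G S).card := by
    exact_mod_cast alpha1_add_tau_le_induce_add G S
  have hSmin := hmin S hSu
  have hScmin := hmin Sᶜ (compl_ne_univ_iff_nonempty S |>.mpr hS)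
  have hcard : (S.card : ℝ) + (Sᶜ.card : ℝ) = n := by
    exact_mod_cast (card_add_card_compl S).trans hn
  rw [← hcard] at hctx ⊢
  linarith
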